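/- arXiv:1710.01575 — 5 statements merged into one kernel-verified Lean document; each statement's English description precedes it below -/
import Mathlib

section
/- For every integer n ≥ 2 and every real q with 0 < q ≤ 1 - 1/n, the infinite product Π_{m=1}^∞ (1 - q^m) satisfies Π_{m=1}^∞ (1 - q^m) ≥ e^{(π²/6)(1-n)}. -/
/-!
Taking logarithms, -log ∏ (1 - q^m) = ∑_m ∑_k q^{mk}/k. Summing over m first turns this into
∑_k (1/k) q^k/(1 - q^k), and 1 - q^k ≥ k q^{k-1} (1 - q) bounds the k-th term by
(q/(1-q))/k². Hence the product is at least exp(-(π²/6) q/(1-q)), and q ≤ 1 - 1/n means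
exactly q/(1-q) ≤ n - 1.
-/

open Real

theorem tsum_tsum_le_of_tsum_le {β γ : Type*} {g : β → γ → ℝ} {u : β → ℝ}
    (hg : ∀ b c, 0 ≤ g b c) (hrow : ∀ b, Summable (g b)) (hu : Summable u)
    (hle : ∀ b, ∑' c, g b c ≤ u b) : ∑' c, ∑' b, g b c ≤ ∑' b, u b := by
  have hrows : Summable fun b => ∑' c, g b c :=
    hu.of_nonneg_of_le (fun b => tsum_nonneg (hg b)) hle
  have hsum : Summable (Function.uncurry g) :=
    (summable_prod_of_nonneg fun p => hg p.1 p.2).mpr ⟨hrow, hrows⟩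
  rw [hsum.tsum_comm]
  exact hrows.tsum_le_tsum hle hu

theorem succ_mul_pow_mul_one_sub_le {q : ℝ} (hq0 : 0 ≤ q) (hq1 : q ≤ 1) (k : ℕ) :
    (k + 1) * q ^ k * (1 - q) ≤ 1 - q ^ (k + 1) := by
  induction k with
  | zero => simp
  | succ k ih =>
    have hmono : (k + 1) * q ^ (k + 1) * (1 - q) ≤ (k + 1) * q ^ k * (1 - q) := by
      have hpow := pow_le_pow_of_le_one hq0 hq1 k.le_succ
      exact mul_le_mul_of_nonneg_right (mul_le_mul_of_nonneg_left hpow (by positivity))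
        (by linarith)
    push_cast
    linear_combination ih + hmono

theorem pow_succ_div_one_sub_pow_succ_le {q : ℝ} (hq0 : 0 ≤ q) (hq1 : q < 1) (k : ℕ) :
    q ^ (k + 1) / (1 - q ^ (k + 1)) ≤ q / (1 - q) / (k + 1) := by
  have hqk : q ^ (k + 1) < 1 := pow_lt_one₀ hq0 hq1 k.succ_ne_zero
  rw [div_div, div_le_div_iff₀ (by linarith) (by nlinarith [hq1])]
  linear_combination q * succ_mul_pow_mul_one_sub_le hq0 hq1.le k

theorem hasSum_pow_succ {r : ℝ} (hr0 : 0 ≤ r) (hr1 : r < 1) :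
    HasSum (fun m : ℕ => r ^ (m + 1)) (r / (1 - r)) := by
  simpa [pow_succ', div_eq_mul_inv] using (hasSum_geometric_of_lt_one hr0 hr1).mul_left r

theorem hasSum_one_div_succ_sq : HasSum (fun k : ℕ => 1 / ((k : ℝ) + 1) ^ 2) (π ^ 2 / 6) := by
  have := (hasSum_nat_add_iff (f := fun n : ℕ => 1 / (n : ℝ) ^ 2) 1).mpr
    (by simpa using hasSum_zeta_two)
  exact_mod_cast this

theorem neg_tsum_log_one_sub_pow_le {q : ℝ} (hq0 : 0 ≤ q) (hq1 : q < 1) :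
    -∑' m : ℕ, log (1 - q ^ (m + 1)) ≤ q / (1 - q) * (π ^ 2 / 6) := by
  have hpow : ∀ k : ℕ, 0 ≤ q ^ (k + 1) ∧ q ^ (k + 1) < 1 :=
    fun k => ⟨by positivity, pow_lt_one₀ hq0 hq1 k.succ_ne_zero⟩
  set g : ℕ → ℕ → ℝ := fun k m => (q ^ (m + 1)) ^ (k + 1) / (k + 1) with hg
  have hlog : ∀ m : ℕ, -log (1 - q ^ (m + 1)) = ∑' k, g k m := fun m =>
    (hasSum_pow_div_log_of_abs_lt_one ((abs_of_nonneg (hpow m).1).trans_lt (hpow m).2)).tsum_eq.symm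
  have hrow : ∀ k : ℕ, HasSum (g k) (q ^ (k + 1) / (1 - q ^ (k + 1)) / (k + 1)) := by
    intro k
    simp only [hg, pow_right_comm q _ (k + 1)]
    exact (hasSum_pow_succ (hpow k).1 (hpow k).2).div_const _
  have hrow_le : ∀ k : ℕ, ∑' m, g k m ≤ q / (1 - q) * (1 / ((k : ℝ) + 1) ^ 2) := by
    intro k
    rw [(hrow k).tsum_eq]
    calc q ^ (k + 1) / (1 - q ^ (k + 1)) / (k + 1) ≤ q / (1 - q) / (k + 1) / (k + 1) := by
          gcongr ?_ / _
          exact pow_succ_div_one_sub_pow_succ_le hq0 hq1 k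
      _ = q / (1 - q) * (1 / ((k : ℝ) + 1) ^ 2) := by field_simp
  have hBasel := hasSum_one_div_succ_sq.mul_left (q / (1 - q))
  calc -∑' m : ℕ, log (1 - q ^ (m + 1)) = ∑' m, ∑' k, g k m := by
        rw [← tsum_neg]; exact tsum_congr hlog
    _ ≤ ∑' k : ℕ, q / (1 - q) * (1 / ((k : ℝ) + 1) ^ 2) :=
        tsum_tsum_le_of_tsum_le (fun k m => by positivity) (fun k => (hrow k).summable)
          hBasel.summable hrow_le
    _ = q / (1 - q) * (π ^ 2 / 6) := hBasel.tsum_eq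

theorem exp_le_tprod_one_sub_pow {q : ℝ} (hq0 : 0 ≤ q) (hq1 : q < 1) :
    rexp (-(q / (1 - q) * (π ^ 2 / 6))) ≤ ∏' m : ℕ, (1 - q ^ (m + 1)) := by
  have hpos : ∀ m : ℕ, 0 < 1 - q ^ (m + 1) :=
    fun m => sub_pos.mpr (pow_lt_one₀ hq0 hq1 m.succ_ne_zero)
  have hsum : Summable fun m : ℕ => log (1 - q ^ (m + 1)) := by
    simpa [sub_eq_add_neg] using
      Real.summable_log_one_add_of_summable (hasSum_pow_succ hq0 hq1).summable.neg
  rw [← rexp_tsum_eq_tprod hpos hsum, exp_le_exp]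
  linarith [neg_tsum_log_one_sub_pow_le hq0 hq1]

theorem tprod_one_sub_pow_ge (n : ℕ) (hn : 2 ≤ n) (q : ℝ) (hq0 : 0 < q)
    (hqn : q ≤ 1 - 1 / n) :
    ∏' m : ℕ, (1 - q ^ (m + 1)) ≥ Real.exp (π ^ 2 / 6 * (1 - n)) := by
  have hn0 : (0 : ℝ) < n := by positivity
  have hq1 : q < 1 := by linarith [one_div_pos.mpr hn0]
  have hratio : q / (1 - q) ≤ n - 1 := by
    rw [div_le_iff₀ (by linarith)]
    have hqn_mul : q * n ≤ n - 1 := by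
      calc q * n ≤ (1 - 1 / n) * n := by gcongr
        _ = n - 1 := by field_simp
    nlinarith
  calc rexp (π ^ 2 / 6 * (1 - n)) ≤ rexp (-(q / (1 - q) * (π ^ 2 / 6))) :=
        exp_le_exp.mpr (by nlinarith [sq_nonneg π])
    _ ≤ ∏' m : ℕ, (1 - q ^ (m + 1)) := exp_le_tprod_one_sub_pow hq0.le hq1
end

section
/- Let n ≥ 2 be an integer, let q ∈ (1 - 1/(n-1), 1 - 1/n] (with the convention that the interval is (0, 1/2] when n = 2), let b ≥ 1.5 be real, and let z ∈ ℂ with |Im z| ≥ b. Then the infinite product Π_{m=1}^∞ |1 + q^{m-1}/z| satisfies Π_{m=1}^∞ |1 + q^{m-1}/z| ≥ e^{-n(b+1)/b²}. -/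
/-!
Since `|Im z| ≥ b`, we have `|z|² ≥ 2b|Re z|`, so for `0 ≤ x < b` each factor satisfies
`|1 + x/z|² = (|z|² + 2x Re z + x²)/|z|² ≥ 1 - x/b`, and `log (1 - t) ≥ -t/(1 - t)` gives
`log |1 + x/z| ≥ -x/(2(b - x)) ≥ -x (b + 1)/b²` for `x = q^m ≤ 1` (using `b² ≥ 2`).
Summing the logarithms over the geometric series gives `-(b + 1)/(b² (1 - q))`, and
`1/(1 - q) ≤ n`.
-/

namespace Complex

theorem one_sub_div_le_norm_one_add_div_sq {z : ℂ} {b x : ℝ} (hb : 0 < b) (hx : 0 ≤ x)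
    (h : b ≤ |z.im|) : 1 - x / b ≤ ‖1 + x / z‖ ^ 2 := by
  have hz : z ≠ 0 := by rintro rfl; simp at h; linarith
  have hre : 2 * b * |z.re| ≤ normSq z := by
    rw [normSq_apply, ← abs_mul_abs_self z.re, ← abs_mul_abs_self z.im]
    nlinarith [sq_nonneg (|z.re| - b), abs_nonneg z.re]
  have hxre : 2 * x * |z.re| ≤ x / b * normSq z := by
    rw [div_mul_eq_mul_div, le_div_iff₀ hb]
    nlinarith
  rw [show 1 + (x : ℂ) / z = (z + x) / z by field_simp, norm_div, div_pow, Complex.sq_norm,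
    Complex.sq_norm, le_div_iff₀ (normSq_pos.2 hz), sub_mul, one_mul]
  simp only [normSq_apply, add_re, ofReal_re, add_im, ofReal_im, add_zero] at hxre ⊢
  nlinarith [neg_abs_le z.re]

theorem neg_div_le_log_norm_one_add_div {z : ℂ} {b x : ℝ} (hx : 0 ≤ x) (hxb : x < b)
    (h : b ≤ |z.im|) : -(x / (2 * (b - x))) ≤ Real.log ‖1 + x / z‖ := by
  have hb : 0 < b := hx.trans_lt hxb
  have hbx : 0 < b - x := sub_pos.2 hxb
  have hpos : 0 < 1 - x / b := by rw [sub_pos, div_lt_one hb]; exact hxb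
  have key : -(x / (b - x)) ≤ 2 * Real.log ‖1 + x / z‖ :=
    calc -(x / (b - x)) = 1 - (1 - x / b)⁻¹ := by field_simp; ring
      _ ≤ Real.log (1 - x / b) := Real.one_sub_inv_le_log_of_pos hpos
      _ ≤ Real.log (‖1 + x / z‖ ^ 2) :=
        Real.log_le_log hpos (one_sub_div_le_norm_one_add_div_sq hb hx h)
      _ = 2 * Real.log ‖1 + x / z‖ := by rw [Real.log_pow]; norm_num
  rw [mul_comm, ← div_div]
  linarith

theorem neg_mul_le_log_norm_one_add_div {z : ℂ} {b x : ℝ} (hb : √2 ≤ b) (h : b ≤ |z.im|)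
    (hx : 0 ≤ x) (hx1 : x ≤ 1) : -((b + 1) / b ^ 2 * x) ≤ Real.log ‖1 + x / z‖ := by
  obtain ⟨hb0, hb2⟩ := Real.sqrt_le_iff.mp hb
  have hb1 : 1 < b := by nlinarith
  -- `x / (2 (b - x)) ≤ x / (2 (b - 1))`, and `1 / (2 (b - 1)) ≤ (b + 1) / b²` is `b² ≥ 2`
  have hconst : x / (2 * (b - x)) ≤ (b + 1) / b ^ 2 * x := by
    rw [div_le_iff₀ (by linarith), div_mul_eq_mul_div, div_mul_eq_mul_div,
      le_div_iff₀ (by positivity)]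
    have : b ^ 2 ≤ 2 * (b + 1) * (b - x) := by nlinarith
    nlinarith [mul_le_mul_of_nonneg_left this hx]
  linarith [neg_div_le_log_norm_one_add_div hx (by linarith) h]

theorem one_add_ofReal_div_ne_zero {z : ℂ} (x : ℝ) (h : z.im ≠ 0) : 1 + x / z ≠ 0 := by
  have hz : z ≠ 0 := fun hz => h (by simp [hz])
  rw [add_div' _ _ _ hz, one_mul]
  exact div_ne_zero (fun h0 => h (by simpa using congrArg im h0)) hz

theorem exp_neg_div_one_sub_le_tprod_norm_one_add_pow_div {z : ℂ} {b q : ℝ}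
    (hb : √2 ≤ b) (h : b ≤ |z.im|) (hq0 : 0 ≤ q) (hq1 : q < 1) :
    Real.exp (-((b + 1) / b ^ 2 / (1 - q))) ≤ ∏' m : ℕ, ‖1 + (q : ℂ) ^ m / z‖ := by
  have him : z.im ≠ 0 := abs_pos.mp ((Real.sqrt_pos.2 two_pos).trans_le (hb.trans h))
  have hpos (m : ℕ) : 0 < ‖1 + (q : ℂ) ^ m / z‖ := by
    simpa using one_add_ofReal_div_ne_zero (q ^ m) him
  have hfactor (m : ℕ) : -((b + 1) / b ^ 2 * q ^ m) ≤ Real.log ‖1 + (q : ℂ) ^ m / z‖ := by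
    simpa using neg_mul_le_log_norm_one_add_div hb h (pow_nonneg hq0 m) (pow_le_one₀ hq0 hq1.le)
  have hgeom : Summable (q ^ ·) := summable_geometric_of_lt_one hq0 hq1
  have hlog : Summable fun m : ℕ => Real.log ‖1 + (q : ℂ) ^ m / z‖ := by
    refine Summable.summable_log_norm_one_add ?_
    simpa [norm_div, abs_of_nonneg hq0] using hgeom.div_const ‖z‖
  rw [← Real.rexp_tsum_eq_tprod hpos hlog, Real.exp_le_exp]
  calc -((b + 1) / b ^ 2 / (1 - q)) = ∑' m : ℕ, -((b + 1) / b ^ 2 * q ^ m) := by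
        rw [tsum_neg, tsum_mul_left, tsum_geometric_of_lt_one hq0 hq1, div_eq_mul_inv]
    _ ≤ _ := (hgeom.mul_left _).neg.tsum_le_tsum hfactor hlog

end Complex

theorem tprod_abs_one_add_qpow_div_z_ge (n : ℕ) (hn : 2 ≤ n) (q : ℝ)
    (hq1 : 1 - 1 / ((n : ℝ) - 1) < q) (hq2 : q ≤ 1 - 1 / n)
    (b : ℝ) (hb : 1.5 ≤ b) (z : ℂ) (him : b ≤ |z.im|) :
    ∏' m : ℕ, ‖1 + (q : ℂ) ^ m / z‖ ≥ Real.exp (-(n : ℝ) * (b + 1) / b ^ 2) := by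
  have hn0 : (0 : ℝ) < n := by positivity
  have hq_pos : 0 < q := by
    have : 1 / ((n : ℝ) - 1) ≤ 1 := by
      rw [div_le_one] <;> linarith [show (2 : ℝ) ≤ n by exact_mod_cast hn]
    linarith
  have hq_lt_one : q < 1 := by linarith [one_div_pos.2 hn0]
  have hb_sqrt : √2 ≤ b := by
    rw [Real.sqrt_le_left] <;> nlinarith
  calc Real.exp (-(n : ℝ) * (b + 1) / b ^ 2) ≤ Real.exp (-((b + 1) / b ^ 2 / (1 - q))) := by
        have hinv : (1 - q)⁻¹ ≤ n := by
          rw [inv_le_comm₀ (by linarith) hn0, ← one_div]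
          linarith
        gcongr
        rw [neg_mul, neg_div, neg_le_neg_iff, div_eq_mul_inv _ (1 - q), mul_comm (n : ℝ),
          mul_div_right_comm]
        gcongr
    _ ≤ _ := Complex.exp_neg_div_one_sub_le_tprod_norm_one_add_pow_div hb_sqrt him hq_pos.le hq_lt_one
end

section
/- For every real q ∈ (0,1), the infinite product Π_{m=1}^∞ (1 - 0.683·q^{m-1}) satisfies Π_{m=1}^∞ (1 - 0.683·q^{m-1}) ≥ e^{-1.149489/(1-q)}, where 1.149489 = 0.683 + 0.683². Consequently, for every integer n ≥ 2 and every q with 0 < q ≤ 1 - 1/n, one has Π_{m=1}^∞ (1 - 0.683·q^{m-1}) ≥ e^{-1.149489·n}. -/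
/-!
Write `a = 0.683` and `c = a + a² = 1.149489`. Numerically `exp (-c) ≤ 1 - a`, and by convexity of
`t ↦ exp (-c t)` this upgrades to `exp (-c t) ≤ 1 - a t` on `[0, 1]`. Applied to `t = q ^ m`, taking
logarithms and summing the geometric series gives `log ∏ (1 - a q ^ m) ≥ -c / (1 - q)`; the second
bound follows from `1 / (1 - q) ≤ n`.
-/

open Real

lemma exp_neg_le_one_sub_0683 : exp (-1.149489) ≤ 1 - 0.683 := by
  have taylor : (1 / (1 - 0.683) : ℝ) ≤ ∑ i ∈ Finset.range 9, (1.149489 : ℝ) ^ i / i.factorial := by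
    simp only [Finset.sum_range_succ, Finset.sum_range_zero]
    norm_num [Nat.factorial]
  have h := taylor.trans (sum_le_exp_of_nonneg (by norm_num) 9)
  rw [exp_neg, inv_le_comm₀ (exp_pos _) (by norm_num)]
  linarith

lemma exp_neg_mul_le_one_sub_mul {a c t : ℝ} (hac : exp (-c) ≤ 1 - a) (ht0 : 0 ≤ t)
    (ht1 : t ≤ 1) : exp (-c * t) ≤ 1 - a * t := by
  have ha : -1 ≤ -a := by linarith [exp_pos (-c)]
  calc exp (-c * t) = exp (-c) ^ t := by rw [exp_mul]
    _ ≤ (1 + -a) ^ t := rpow_le_rpow (exp_pos _).le (by linarith) ht0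
    _ ≤ 1 + t * -a := rpow_one_add_le_one_add_mul_self ha ht0 ht1
    _ = 1 - a * t := by ring

lemma exp_neg_tsum_le_tprod {ι : Type*} {f g : ι → ℝ} (hg : Summable g)
    (hgf : ∀ i, exp (-g i) ≤ f i) (hf : ∀ i, f i ≤ 1) : exp (-∑' i, g i) ≤ ∏' i, f i := by
  have hf_pos : ∀ i, 0 < f i := fun i ↦ (exp_pos _).trans_le (hgf i)
  have hlog : ∀ i, -g i ≤ log (f i) := fun i ↦ (le_log_iff_exp_le (hf_pos i)).2 (hgf i)
  have hlog_summable : Summable fun i ↦ log (f i) := by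
    rw [← summable_neg_iff]
    exact hg.of_nonneg_of_le (fun i ↦ neg_nonneg.2 (log_nonpos (hf_pos i).le (hf i)))
      (fun i ↦ by linarith [hlog i])
  rw [← rexp_tsum_eq_tprod hf_pos hlog_summable, exp_le_exp, ← tsum_neg]
  exact hg.neg.tsum_le_tsum hlog hlog_summable

theorem tprod_one_sub_const_mul_pow_ge (q : ℝ) (hq0 : 0 < q) (hq1 : q < 1) :
    ∏' m : ℕ, (1 - 0.683 * q ^ m) ≥ Real.exp (-1.149489 / (1 - q)) ∧
    ∀ n : ℕ, 2 ≤ n → q ≤ 1 - 1 / n →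
      ∏' m : ℕ, (1 - 0.683 * q ^ m) ≥ Real.exp (-1.149489 * n) := by
  have hgeom : HasSum (fun m : ℕ ↦ 1.149489 * q ^ m) (1.149489 / (1 - q)) := by
    simpa [div_eq_mul_inv] using (hasSum_geometric_of_lt_one hq0.le hq1).mul_left 1.149489
  have hmain : exp (-1.149489 / (1 - q)) ≤ ∏' m : ℕ, (1 - 0.683 * q ^ m) := by
    rw [neg_div, ← hgeom.tsum_eq]
    refine exp_neg_tsum_le_tprod hgeom.summable (fun m ↦ ?_) (fun m ↦ ?_)
    · rw [← neg_mul]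
      exact exp_neg_mul_le_one_sub_mul exp_neg_le_one_sub_0683 (pow_nonneg hq0.le m)
        (pow_le_one₀ hq0.le hq1.le)
    · linarith [pow_nonneg hq0.le m]
  refine ⟨hmain, fun n hn hqn ↦ le_trans ?_ hmain⟩
  have hn : (0 : ℝ) < n := by positivity
  have h1q : 1 / (1 - q) ≤ n := by
    rw [div_le_iff₀ (by linarith)]
    rw [le_sub_comm, div_le_iff₀ hn] at hqn
    linarith
  rw [exp_le_exp, neg_div, neg_mul, neg_le_neg_iff, div_eq_mul_one_div]
  gcongr
end

section
/- Let q ∈ (0.30925, 1) and let z = -a + b·i with a > 0 real and b real satisfying b ≥ max(a, 132). Then |Θ*(q,z)| > |G(q,z)|; consequently θ(q,z) ≠ 0. -/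
open Complex Real

/-- The partial theta function `θ(q,z) = ∑_{j=0}^∞ q^{j(j+1)/2} z^j`. -/
noncomputable def partialTheta (q : ℝ) (z : ℂ) : ℂ :=
  ∑' j : ℕ, (q : ℂ) ^ (j * (j + 1) / 2) * z ^ j

/-- `G(q,z) = ∑_{j=1}^∞ q^{j(j-1)/2} z^{-j}`, the negative-index part of `Θ*`. -/
noncomputable def Gfun (q : ℝ) (z : ℂ) : ℂ :=
  ∑' j : ℕ, (q : ℂ) ^ (j * (j + 1) / 2) * z ^ (-((j : ℤ) + 1))

/-- `Θ*(q,z) = ∑_{j=-∞}^∞ q^{j(j+1)/2} z^j`. -/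
noncomputable def ThetaStar (q : ℝ) (z : ℂ) : ℂ :=
  ∑' j : ℤ, (q : ℂ) ^ ((j * (j + 1)) / 2).toNat * z ^ j


/-!
Writing `q = e^{2πiτ}`, `Θ*(q,·)` is the Jacobi theta function `θ₂(w,τ)`. The modular
transformation `τ ↦ -1/τ` turns it into a rapidly converging series: for `q > 1/4` and
`|arg z| ≤ 3π/4` every nonconstant term of `θ₂(w/τ,-1/τ)` is bounded by `4^{-|n|}`, so
`|θ₂(w/τ,-1/τ)| ≥ 1/3`, while the factors `(-iτ)^{-1/2}` and `e^{-πiw²/τ}` of the functional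
equation have modulus at least `1` once `|z| ≥ 2e^π`. Hence `|Θ*| ≥ 1/3`, whereas
`|G| ≤ 1/(|z| - 1) ≤ 1/131`, and `θ = Θ* - G` cannot vanish.
-/

-- With `q = e^{2πiτ}` and `z = q^{-1/2} e^{2πiw}` one has `Θ*(q,z) = θ₂(w,τ)`.
noncomputable def thetaStarTau (q : ℝ) : ℂ := Real.log q / (2 * π * I)

noncomputable def thetaStarZ (q : ℝ) (z : ℂ) : ℂ :=
  (Real.log q / 2 + Complex.log z) / (2 * π * I)

lemma neg_I_mul_thetaStarTau (q : ℝ) :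
    -I * thetaStarTau q = ((-Real.log q / (2 * π) : ℝ) : ℂ) := by
  rw [thetaStarTau]
  push_cast
  field_simp

lemma thetaStarTau_im (q : ℝ) : (thetaStarTau q).im = -Real.log q / (2 * π) := by
  simpa only [neg_mul, neg_re, mul_re, I_re, I_im, zero_mul, one_mul, zero_sub, neg_neg,
    ofReal_re] using congrArg Complex.re (neg_I_mul_thetaStarTau q)

lemma two_mul_toNat_mul_succ_div_two (n : ℤ) :
    2 * ((n * (n + 1) / 2).toNat : ℤ) = n * (n + 1) := by
  rw [Int.toNat_of_nonneg (Int.ediv_nonneg (by nlinarith [sq_nonneg (2 * n + 1)]) two_pos.le),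
    Int.mul_ediv_cancel' (Int.even_mul_succ_self n).two_dvd]

lemma jacobiTheta₂_term_thetaStar {q : ℝ} (hq : 0 < q) {z : ℂ} (hz : z ≠ 0) (n : ℤ) :
    jacobiTheta₂_term n (thetaStarZ q z) (thetaStarTau q) =
      (q : ℂ) ^ (n * (n + 1) / 2).toNat * z ^ n := by
  have hm : 2 * ((n * (n + 1) / 2).toNat : ℂ) = n * (n + 1) := by
    exact_mod_cast two_mul_toNat_mul_succ_div_two n
  have hexponent : 2 * π * I * n * thetaStarZ q z + π * I * n ^ 2 * thetaStarTau q =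
      (n * (n + 1) / 2).toNat * (Real.log q : ℂ) + n * Complex.log z := by
    rw [thetaStarZ, thetaStarTau]
    field_simp
    linear_combination -(Real.log q : ℂ) * hm
  rw [jacobiTheta₂_term, hexponent, Complex.exp_add, Complex.exp_nat_mul, Complex.exp_int_mul,
    Complex.ofReal_log hq.le, Complex.exp_log (by exact_mod_cast hq.ne'), Complex.exp_log hz]

lemma thetaStar_eq_jacobiTheta₂ {q : ℝ} (hq : 0 < q) {z : ℂ} (hz : z ≠ 0) :
    ThetaStar q z = jacobiTheta₂ (thetaStarZ q z) (thetaStarTau q) :=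
  tsum_congr fun n ↦ (jacobiTheta₂_term_thetaStar hq hz n).symm

lemma summable_thetaStar_term {q : ℝ} (hq₀ : 0 < q) (hq₁ : q < 1) {z : ℂ} (hz : z ≠ 0) :
    Summable fun n : ℤ ↦ (q : ℂ) ^ (n * (n + 1) / 2).toNat * z ^ n := by
  refine ((summable_jacobiTheta₂_term_iff _ _).2 ?_).congr (jacobiTheta₂_term_thetaStar hq₀ hz)
  rw [thetaStarTau_im]
  exact div_pos (neg_pos.2 (Real.log_neg hq₀ hq₁)) (by positivity)

lemma thetaStar_eq_partialTheta_add_Gfun {q : ℝ} (hq₀ : 0 < q) (hq₁ : q < 1) {z : ℂ}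
    (hz : z ≠ 0) : ThetaStar q z = partialTheta q z + Gfun q z := by
  have hs := summable_thetaStar_term hq₀ hq₁ hz
  rw [ThetaStar,
    tsum_of_nat_of_neg_add_one (f := fun n : ℤ ↦ (q : ℂ) ^ (n * (n + 1) / 2).toNat * z ^ n)
      (hs.comp_injective Nat.cast_injective)
      (hs.comp_injective fun a b h ↦ by simpa only [neg_inj, add_left_inj, Nat.cast_inj] using h),
    partialTheta, Gfun]
  refine congrArg₂ (· + ·) (tsum_congr fun n ↦ ?_) (tsum_congr fun n ↦ ?_)
  · have : ((n : ℤ) * (n + 1) / 2).toNat = n * (n + 1) / 2 := by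
      rw [show (n : ℤ) * (n + 1) = (n * (n + 1) : ℕ) by push_cast; ring]; omega
    rw [this, zpow_natCast]
  · have : (-((n : ℤ) + 1) * (-(n + 1) + 1) / 2).toNat = n * (n + 1) / 2 := by
      rw [show -((n : ℤ) + 1) * (-(n + 1) + 1) = (n * (n + 1) : ℕ) by push_cast; ring]; omega
    rw [this]

lemma norm_Gfun_le {q : ℝ} (hq : |q| ≤ 1) {z : ℂ} (hz : 1 < ‖z‖) :
    ‖Gfun q z‖ ≤ 1 / (‖z‖ - 1) := by
  set ρ := ‖z‖⁻¹
  have hgeom : HasSum (fun j : ℕ ↦ ρ * ρ ^ j) (ρ * (1 - ρ)⁻¹) :=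
    (hasSum_geometric_of_lt_one (by positivity) (inv_lt_one_of_one_lt₀ hz)).mul_left ρ
  refine (tsum_of_norm_bounded hgeom fun j ↦ ?_).trans_eq ?_
  · have hpow : ‖z‖ ^ (-((j : ℤ) + 1)) = ρ * ρ ^ j := by
      rw [← pow_succ', inv_pow, ← zpow_natCast, ← zpow_neg]
      push_cast
      rfl
    rw [norm_mul, norm_pow, norm_zpow, Complex.norm_real, Real.norm_eq_abs, hpow]
    exact mul_le_of_le_one_left (by positivity) (pow_le_one₀ (abs_nonneg q) hq)
  · have : ‖z‖ - 1 ≠ 0 := by linarith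
    simp only [ρ]
    field_simp

lemma norm_tsum_sub_apply_zero_le {E : Type*} [NormedAddCommGroup E] [CompleteSpace E]
    {f : ℤ → E} {r : ℝ} (hr : r < 1) (hf : ∀ n, ‖f n‖ ≤ r ^ n.natAbs) :
    ‖∑' n, f n - f 0‖ ≤ 2 * r / (1 - r) := by
  have hr₀ : 0 ≤ r := (norm_nonneg _).trans (by simpa using hf 1)
  have hgeom : HasSum (fun n : ℕ ↦ r ^ (n + 1)) (r / (1 - r)) := by
    simpa only [pow_succ', div_eq_mul_inv] using (hasSum_geometric_of_lt_one hr₀ hr).mul_left r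
  have hpos (n : ℕ) : ‖f (n + 1)‖ ≤ r ^ (n + 1) := by
    simpa only [show ((n : ℤ) + 1).natAbs = n + 1 by omega] using hf (n + 1)
  have hneg (n : ℕ) : ‖f (-(n + 1))‖ ≤ r ^ (n + 1) := by
    simpa only [show (-((n : ℤ) + 1)).natAbs = n + 1 by omega] using hf (-(n + 1))
  rw [tsum_of_add_one_of_neg_add_one (.of_norm_bounded hgeom.summable hpos)
    (.of_norm_bounded hgeom.summable hneg), add_sub_right_comm, add_sub_cancel_right]
  calc _ ≤ _ := norm_add_le _ _
    _ ≤ r / (1 - r) + r / (1 - r) :=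
      add_le_add (tsum_of_norm_bounded hgeom hpos) (tsum_of_norm_bounded hgeom hneg)
    _ = 2 * r / (1 - r) := by ring

lemma norm_jacobiTheta₂_term_le_pow {w τ : ℂ} (hw : |w.im| ≤ 3 / 8 * τ.im) (n : ℤ) :
    ‖jacobiTheta₂_term n w τ‖ ≤ rexp (-(π * τ.im / 4)) ^ n.natAbs := by
  rw [norm_jacobiTheta₂_term, ← Real.exp_nat_mul, Real.exp_le_exp, Nat.cast_natAbs, Int.cast_abs]
  have hm : 0 ≤ |(n : ℝ)| * (|(n : ℝ)| - 1) := by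
    rcases eq_or_ne n 0 with rfl | hn
    · simp
    · have : (1 : ℝ) ≤ |(n : ℝ)| := by rw [← Int.cast_abs]; exact_mod_cast Int.one_le_abs hn
      nlinarith
  have hτ : 0 ≤ τ.im := by linarith [abs_nonneg w.im]
  have hcross : -(n * w.im) ≤ |(n : ℝ)| * (3 / 8 * τ.im) :=
    calc -(n * w.im) ≤ |n * w.im| := neg_le_abs _
      _ = |(n : ℝ)| * |w.im| := abs_mul _ _
      _ ≤ |(n : ℝ)| * (3 / 8 * τ.im) := mul_le_mul_of_nonneg_left hw (abs_nonneg _)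
  rw [← sq_abs (n : ℝ)]
  nlinarith [mul_nonneg (mul_nonneg pi_pos.le hτ) hm, mul_le_mul_of_nonneg_left hcross pi_pos.le]

lemma one_third_le_norm_jacobiTheta₂ {w τ : ℂ} (hτ : Real.log 4 ≤ π * τ.im / 4)
    (hw : |w.im| ≤ 3 / 8 * τ.im) : 1 / 3 ≤ ‖jacobiTheta₂ w τ‖ := by
  set r := rexp (-(π * τ.im / 4))
  have hr : r ≤ 1 / 4 := by
    rw [← Real.exp_log (by norm_num : (0 : ℝ) < 1 / 4), Real.exp_le_exp, one_div, Real.log_inv]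
    linarith
  have hsub : ‖jacobiTheta₂ w τ - 1‖ ≤ 2 * r / (1 - r) := by
    have h₀ : jacobiTheta₂_term 0 w τ = 1 := by simp [jacobiTheta₂_term]
    rw [← h₀]
    exact norm_tsum_sub_apply_zero_le (hr.trans_lt (by norm_num))
      (norm_jacobiTheta₂_term_le_pow hw)
  have hbound : 2 * r / (1 - r) ≤ 2 / 3 := by
    rw [div_le_iff₀ (by linarith)]
    linarith
  linarith [norm_sub_norm_le (1 : ℂ) (jacobiTheta₂ w τ), norm_sub_rev (1 : ℂ) (jacobiTheta₂ w τ),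
    norm_one (α := ℂ)]

lemma one_le_norm_one_div_cpow_half {x : ℝ} (hx₀ : 0 < x) (hx₁ : x ≤ 1) :
    1 ≤ ‖1 / (x : ℂ) ^ (1 / 2 : ℂ)‖ := by
  rw [norm_div, norm_one, norm_cpow_eq_rpow_re_of_pos hx₀,
    one_le_div₀ (Real.rpow_pos_of_pos hx₀ _)]
  exact Real.rpow_le_one hx₀.le hx₁ (by norm_num)

lemma im_neg_one_div_thetaStarTau (q : ℝ) :
    (-1 / thetaStarTau q).im = 2 * π / -Real.log q := by
  have : -1 / thetaStarTau q = ((2 * π / -Real.log q : ℝ) : ℂ) * I := by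
    rw [thetaStarTau]
    push_cast
    field_simp
  rw [this, Complex.mul_I_im, Complex.ofReal_re]

lemma thetaStarZ_div_thetaStarTau {q : ℝ} (hq : Real.log q ≠ 0) (z : ℂ) :
    thetaStarZ q z / thetaStarTau q = 1 / 2 + Complex.log z / Real.log q := by
  have : (Real.log q : ℂ) ≠ 0 := Complex.ofReal_ne_zero.2 hq
  rw [thetaStarZ, thetaStarTau]
  field_simp

lemma neg_pi_mul_I_mul_thetaStarZ_sq_div_thetaStarTau (q : ℝ) (z : ℂ) :
    -π * I * thetaStarZ q z ^ 2 / thetaStarTau q =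
      (Real.log q / 2 + Complex.log z) ^ 2 / ((-2 * Real.log q : ℝ) : ℂ) := by
  rw [thetaStarZ, thetaStarTau]
  push_cast
  field_simp

lemma neg_log_lt_two_mul_log_two {q : ℝ} (hq : 1 / 4 < q) : -Real.log q < 2 * Real.log 2 := by
  have h := Real.log_lt_log (by norm_num) hq
  rw [one_div, Real.log_inv, show (4 : ℝ) = 2 ^ 2 by norm_num, Real.log_pow] at h
  push_cast at h
  linarith

lemma one_le_norm_exp_thetaStar {q : ℝ} (hq₀ : 1 / 4 < q) (hq₁ : q < 1) {z : ℂ}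
    (hz : 2 * rexp π ≤ ‖z‖) :
    1 ≤ ‖cexp (-π * I * thetaStarZ q z ^ 2 / thetaStarTau q)‖ := by
  have hL : Real.log q < 0 := Real.log_neg (by linarith) hq₁
  have hre : ((Real.log q / 2 + Complex.log z) ^ 2).re =
      (Real.log q / 2 + Real.log ‖z‖) ^ 2 - arg z ^ 2 := by
    simp [sq, Complex.log_re, Complex.log_im]
  rw [neg_pi_mul_I_mul_thetaStarZ_sq_div_thetaStarTau, Complex.norm_exp, Complex.div_ofReal_re,
    Real.one_le_exp_iff, hre]
  refine div_nonneg ?_ (by linarith)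
  rw [sub_nonneg, ← sq_abs (arg z)]
  refine pow_le_pow_left₀ (abs_nonneg _) ((abs_arg_le_pi z).trans ?_) 2
  have h := Real.log_le_log (by positivity) hz
  rw [Real.log_mul two_ne_zero (Real.exp_pos π).ne', Real.log_exp] at h
  linarith [neg_log_lt_two_mul_log_two hq₀]

lemma one_third_le_norm_thetaStar {q : ℝ} (hq₀ : 1 / 4 < q) (hq₁ : q < 1) {z : ℂ}
    (hz : 2 * rexp π ≤ ‖z‖) (harg : |arg z| ≤ 3 * π / 4) : 1 / 3 ≤ ‖ThetaStar q z‖ := by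
  have hz₀ : z ≠ 0 := norm_pos_iff.1 ((by positivity : 0 < 2 * rexp π).trans_le hz)
  have hL : Real.log q < 0 := Real.log_neg (by linarith) hq₁
  have hL₂ := neg_log_lt_two_mul_log_two hq₀
  have hlog₂ := Real.log_two_lt_d9
  have hprefactor : 1 ≤ ‖1 / (-I * thetaStarTau q) ^ (1 / 2 : ℂ)‖ := by
    rw [neg_I_mul_thetaStarTau]
    refine one_le_norm_one_div_cpow_half (div_pos (by linarith) (by positivity)) ?_
    rw [div_le_one (by positivity)]
    linarith [pi_gt_three]
  have hexp := one_le_norm_exp_thetaStar hq₀ hq₁ hz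
  have htheta :
      1 / 3 ≤ ‖jacobiTheta₂ (thetaStarZ q z / thetaStarTau q) (-1 / thetaStarTau q)‖ := by
    apply one_third_le_norm_jacobiTheta₂
    · have h : π * (-1 / thetaStarTau q).im / 4 = π ^ 2 / (2 * -Real.log q) := by
        rw [im_neg_one_div_thetaStarTau]
        field_simp
        ring
      rw [h, le_div_iff₀ (by linarith), show (4 : ℝ) = 2 ^ 2 by norm_num, Real.log_pow]
      push_cast
      nlinarith [pi_gt_three, Real.log_pos one_lt_two]
    · rw [thetaStarZ_div_thetaStarTau hL.ne, im_neg_one_div_thetaStarTau, Complex.add_im,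
        Complex.div_ofReal_im, Complex.log_im, show ((1 : ℂ) / 2).im = 0 by norm_num, zero_add,
        abs_div, abs_of_neg hL]
      calc |arg z| / -Real.log q ≤ 3 * π / 4 / -Real.log q := by gcongr; linarith
        _ = 3 / 8 * (2 * π / -Real.log q) := by ring
  rw [thetaStar_eq_jacobiTheta₂ (by linarith) hz₀, jacobiTheta₂_functional_equation, norm_mul,
    norm_mul]
  calc (1 : ℝ) / 3 = 1 * 1 * (1 / 3) := by norm_num
    _ ≤ _ := by gcongr

lemma abs_arg_le_three_pi_div_four {z : ℂ} (him : 0 < z.im) (hre : -z.re ≤ z.im) :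
    |arg z| ≤ 3 * π / 4 := by
  have harccos : arccos (-(√2 / 2)) = 3 * π / 4 := by
    rw [arccos_neg, ← cos_pi_div_four, arccos_cos (by positivity) (by linarith [pi_pos])]
    ring
  have hnorm : 0 < ‖z‖ := norm_pos_iff.2 fun h ↦ by simp [h] at him
  rw [abs_of_nonneg (arg_nonneg_iff.2 him.le), arg_of_im_pos him, ← harccos]
  refine arccos_le_arccos ?_
  rw [le_div_iff₀ hnorm]
  by_contra! h
  have hsq : ‖z‖ ^ 2 = z.re ^ 2 + z.im ^ 2 := by
    rw [Complex.sq_norm, Complex.normSq_apply]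
    ring
  have hhalf : (√2 / 2 * ‖z‖) * (√2 / 2 * ‖z‖) = ‖z‖ ^ 2 / 2 := by
    ring_nf
    rw [Real.sq_sqrt zero_le_two]
    ring
  have hpos : 0 ≤ √2 / 2 * ‖z‖ := by positivity
  have h₁ := mul_self_lt_mul_self hpos (show √2 / 2 * ‖z‖ < -z.re by linarith)
  have h₂ := mul_self_le_mul_self (by linarith) hre
  nlinarith

lemma two_mul_exp_pi_le : 2 * rexp π ≤ 132 :=
  calc 2 * rexp π ≤ 2 * rexp 1 ^ 4 := by
        rw [← Real.exp_nat_mul]; gcongr; push_cast; linarith [pi_lt_four]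
    _ ≤ 2 * 2.7182818286 ^ 4 := by gcongr; exact Real.exp_one_lt_d9.le
    _ ≤ 132 := by norm_num

theorem abs_thetaStar_gt_left_b_ge_a_general (q : ℝ) (hq1 : 0.30925 < q) (hq2 : q < 1)
    (a b : ℝ) (hb : max a 132 ≤ b) (z : ℂ) (hz : z = -a + b * I) :
    ‖ThetaStar q z‖ > ‖Gfun q z‖ ∧ partialTheta q z ≠ 0 := by
  obtain ⟨hab, hb⟩ := max_le_iff.1 hb
  have him : z.im = b := by simp [hz]
  have hre : z.re = -a := by simp [hz]
  have hnorm : 132 ≤ ‖z‖ := hb.trans (him ▸ (le_abs_self _).trans (abs_im_le_norm z))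
  have hGfun : ‖Gfun q z‖ < 1 / 3 :=
    calc ‖Gfun q z‖ ≤ 1 / (‖z‖ - 1) :=
          norm_Gfun_le (abs_le.2 ⟨by linarith, hq2.le⟩) (by linarith)
      _ ≤ 1 / 131 := by gcongr; linarith
      _ < 1 / 3 := by norm_num
  have hThetaStar : 1 / 3 ≤ ‖ThetaStar q z‖ :=
    one_third_le_norm_thetaStar (by linarith) hq2 (two_mul_exp_pi_le.trans hnorm)
      (abs_arg_le_three_pi_div_four (by linarith) (by linarith))
  have hlt : ‖Gfun q z‖ < ‖ThetaStar q z‖ := hGfun.trans_le hThetaStar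
  refine ⟨hlt, fun h ↦ hlt.ne ?_⟩
  rw [thetaStar_eq_partialTheta_add_Gfun (by linarith) hq2 (norm_pos_iff.1 (by linarith)), h,
    zero_add]

theorem abs_thetaStar_gt_left_b_ge_a (q : ℝ) (hq1 : 0.30925 < q) (hq2 : q < 1)
    (a b : ℝ) (ha : 0 < a) (hb : max a 132 ≤ b) (z : ℂ) (hz : z = -a + b * I) :
    ‖ThetaStar q z‖ > ‖Gfun q z‖ ∧ partialTheta q z ≠ 0 :=
  abs_thetaStar_gt_left_b_ge_a_general q hq1 hq2 a b hb z hz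
end

section
/- Let n ≥ 3 be an integer, let q ∈ (1 - 1/(n-1), 1 - 1/n], and let z ∈ ℂ with Re z ≥ 0. Then the finite product Π_{m=1}^n |1 + z·q^m| satisfies Π_{m=1}^n |1 + z·q^m| ≥ |z|^n · 2^{-(n+3)}. -/
/-!
Since `Re (z q^m) ≥ 0`, each factor satisfies `|1 + z q^m| ≥ |z| q^m`, so the product is at least
`|z|^n q^(n(n+1)/2)`. Weighted AM–GM between `1` and `1/2` gives `(1/2)^(2x) ≤ 1 - x` for
`0 ≤ x ≤ 1/2`; with `x = 1/(n-1)` this yields `q^(n(n+1)/2) ≥ (1/2)^(n(n+1)/(n-1))`, and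
`n(n+1)/(n-1) ≤ n + 3` exactly when `n ≥ 3`.
-/

open Finset

lemma Complex.norm_le_norm_one_add {w : ℂ} (hw : 0 ≤ w.re) : ‖w‖ ≤ ‖1 + w‖ := by
  rw [Complex.norm_def, Complex.norm_def]
  gcongr
  simp only [Complex.normSq_apply, Complex.add_re, Complex.add_im, Complex.one_re,
    Complex.one_im]
  nlinarith

lemma norm_pow_mul_pow_sum_le_prod_norm_one_add (s : Finset ℕ) {z : ℂ} (hz : 0 ≤ z.re)
    {q : ℝ} (hq : 0 ≤ q) :
    ‖z‖ ^ #s * q ^ (∑ m ∈ s, m) ≤ ∏ m ∈ s, ‖1 + z * (q : ℂ) ^ m‖ := by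
  rw [← prod_pow_eq_pow_sum, ← prod_const, ← prod_mul_distrib]
  refine prod_le_prod (fun m _ => by positivity) fun m _ => ?_
  have hre : 0 ≤ (z * (q : ℂ) ^ m).re := by
    rw [← Complex.ofReal_pow, Complex.re_mul_ofReal]; positivity
  simpa [abs_of_nonneg hq] using Complex.norm_le_norm_one_add hre

lemma sum_Icc_one_id_mul_two (n : ℕ) : (∑ i ∈ Icc 1 n, i) * 2 = n * (n + 1) := by
  have := sum_range_id_mul_two (n + 1)
  rw [range_eq_Ico, sum_eq_sum_Ico_succ_bot (by omega), Ico_add_one_right_eq_Icc] at this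
  simpa [mul_comm] using this

lemma half_rpow_two_mul_le_one_sub {x : ℝ} (hx₀ : 0 ≤ x) (hx₁ : x ≤ 1 / 2) :
    (1 / 2 : ℝ) ^ (2 * x) ≤ 1 - x := by
  have := Real.geom_mean_le_arith_mean2_weighted (p₁ := 1) (p₂ := 1 / 2)
    (by linarith : 0 ≤ 1 - 2 * x) (by linarith : 0 ≤ 2 * x) zero_le_one (by norm_num)
    (by ring)
  simpa [Real.one_rpow, one_mul] using this.trans_eq (by ring)

lemma half_pow_add_three_le_pow_sum_Icc {n : ℕ} (hn : 3 ≤ n) {q : ℝ}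
    (hq : 1 - 1 / ((n : ℝ) - 1) ≤ q) :
    (1 / 2 : ℝ) ^ (n + 3) ≤ q ^ (∑ m ∈ Icc 1 n, m) := by
  have hn' : (3 : ℝ) ≤ n := by exact_mod_cast hn
  set x := 1 / ((n : ℝ) - 1)
  have hx₀ : 0 ≤ x := one_div_nonneg.mpr (by linarith)
  have hx₁ : x ≤ 1 / 2 := by rw [div_le_div_iff₀] <;> linarith
  have hS : ((∑ m ∈ Icc 1 n, m : ℕ) : ℝ) = n * (n + 1) / 2 := by
    rw [eq_div_iff two_ne_zero]; exact_mod_cast sum_Icc_one_id_mul_two n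
  have hexp : 2 * x * (∑ m ∈ Icc 1 n, m : ℕ) ≤ ((n + 3 : ℕ) : ℝ) := by
    rw [hS]; push_cast
    rw [show 2 * x * (n * (n + 1) / 2) = n * (n + 1) / ((n : ℝ) - 1) by ring, div_le_iff₀]
    <;> nlinarith
  calc (1 / 2 : ℝ) ^ (n + 3) ≤ (1 / 2 : ℝ) ^ (2 * x * (∑ m ∈ Icc 1 n, m : ℕ)) := by
        rw [← Real.rpow_natCast]
        exact Real.rpow_le_rpow_of_exponent_ge (by norm_num) (by norm_num) hexp
    _ = ((1 / 2 : ℝ) ^ (2 * x)) ^ (∑ m ∈ Icc 1 n, m) := by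
        rw [Real.rpow_mul_natCast (by norm_num)]
    _ ≤ q ^ (∑ m ∈ Icc 1 n, m) := by
        gcongr
        exact (half_rpow_two_mul_le_one_sub hx₀ hx₁).trans hq

theorem prod_abs_one_add_z_qpow_ge_general (n : ℕ) (hn : 3 ≤ n) (q : ℝ)
    (hq1 : 1 - 1 / ((n : ℝ) - 1) < q)
    (z : ℂ) (hre : 0 ≤ z.re) :
    ∏ m ∈ Finset.Icc 1 n, ‖1 + z * (q : ℂ) ^ m‖ ≥
      ‖z‖ ^ n * 2 ^ (-((n : ℤ) + 3)) := by
  have hq : 0 ≤ q := by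
    have : 1 / ((n : ℝ) - 1) ≤ 1 := by
      rw [div_le_one₀] <;> linarith [show (3 : ℝ) ≤ n by exact_mod_cast hn]
    linarith
  have htwo_zpow : (2 : ℝ) ^ (-((n : ℤ) + 3)) = (1 / 2) ^ (n + 3) := by
    rw [one_div, inv_pow, ← zpow_natCast, ← zpow_neg]; push_cast; rfl
  calc ‖z‖ ^ n * 2 ^ (-((n : ℤ) + 3)) ≤ ‖z‖ ^ n * q ^ (∑ m ∈ Icc 1 n, m) := by
        rw [htwo_zpow]; gcongr; exact half_pow_add_three_le_pow_sum_Icc hn hq1.le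
    _ ≤ _ := by
        simpa using norm_pow_mul_pow_sum_le_prod_norm_one_add (Icc 1 n) hre hq

theorem prod_abs_one_add_z_qpow_ge (n : ℕ) (hn : 3 ≤ n) (q : ℝ)
    (hq1 : 1 - 1 / ((n : ℝ) - 1) < q) (hq2 : q ≤ 1 - 1 / n)
    (z : ℂ) (hre : 0 ≤ z.re) :
    ∏ m ∈ Finset.Icc 1 n, ‖1 + z * (q : ℂ) ^ m‖ ≥
      ‖z‖ ^ n * 2 ^ (-((n : ℤ) + 3)) :=
  prod_abs_one_add_z_qpow_ge_general n hn q hq1 z hre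
end
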